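/- In the ıquantum group U^ı of type AI inside U_q(sl_n) with parameters ς_i = q⁻¹, κ_i = 0 — i.e., the subalgebra generated by B_i = F_i + q⁻¹E_iK_i⁻¹, i = 1,…,n−1 — the generators satisfy [B_i, B_j] = 0 when |i − j| > 1 and [B_i, [B_i, B_j]_q]_{q⁻¹} = B_j when |i − j| = 1, where [x,y]_{q^b} := xy − q^b yx. -/
import Mathlib


noncomputable section

/-- `K = ℂ(q)`, with `qq` playing the role of `q`. -/
abbrev Kq : Type := RatFunc ℂ

/-- The variable `q`. -/
def qq : Kq := RatFunc.X

/-- The entries of the type `A_{n−1}` Cartan matrix. -/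
def cartanA (i j : ℕ) : ℤ := if i = j then 2 else if |(i : ℤ) - j| = 1 then -1 else 0

section Helpers

variable {R : Type} [Field R] {A : Type} [Ring A] [Algebra R A]

theorem mytrail {a b : A} {s : R} (h : a * b = s • (b * a)) (t : A) :
    a * (b * t) = s • (b * (a * t)) := by
  rw [← mul_assoc, h, smul_mul_assoc, mul_assoc]

omit [Field R] [Algebra R A] in
theorem mytrail1 {a b : A} (h : a * b = b * a) (t : A) :
    a * (b * t) = b * (a * t) := by rw [← mul_assoc, h, mul_assoc]

theorem mytrail3 {a b u v : A} {s : R} (h : a * b = b * a + s • u - s • v) (t : A) :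
    a * (b * t) = b * (a * t) + s • (u * t) - s • (v * t) := by
  rw [← mul_assoc, h, sub_mul, add_mul, smul_mul_assoc, smul_mul_assoc, mul_assoc]

omit [Field R] [Algebra R A] in
theorem mytrail0 {a b : A} (h : a * b = 1) (t : A) : a * (b * t) = t := by
  rw [← mul_assoc, h, one_mul]

theorem swap_inv {Kk kk t : A} {s : R} (h1 : Kk * kk = 1) (h2 : kk * Kk = 1)
    (hs : s ≠ 0) (h : Kk * t = s • (t * Kk)) : kk * t = s⁻¹ • (t * kk) := by
  have h3 : t * Kk = s⁻¹ • (Kk * t) := by rw [h, smul_smul, inv_mul_cancel₀ hs, one_smul]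
  have h4 : kk * t = kk * ((t * Kk) * kk) := by rw [mul_assoc, h1, mul_one]
  rw [h4, h3]
  simp only [mul_smul_comm, smul_mul_assoc, ← mul_assoc, h2, one_mul]

omit [Field R] [Algebra R A] in
theorem swap_inv1 {Kk kk t : A} (h1 : Kk * kk = 1) (h2 : kk * Kk = 1)
    (h : Kk * t = t * Kk) : kk * t = t * kk := by
  have h4 : kk * t = kk * ((t * Kk) * kk) := by rw [mul_assoc, h1, mul_one]
  rw [h4, ← h, ← mul_assoc, ← mul_assoc, h2, one_mul]

theorem qq_ne_zero : qq ≠ 0 := RatFunc.X_ne_zero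

theorem qq_sq_sub_one_ne_zero : qq ^ 2 - 1 ≠ 0 := by
  intro h
  have h1 : qq ^ 2 = 1 := by
    have := sub_eq_zero.mp h; exact this
  have h2 : (Polynomial.X : Polynomial ℂ) ^ 2 = 1 := by
    apply IsFractionRing.injective (Polynomial ℂ) Kq
    rw [map_pow, map_one]
    exact h1
  simpa using congrArg (fun p => Polynomial.coeff p 0) h2

theorem qq_sub_inv_ne_zero : qq - qq⁻¹ ≠ 0 := by
  intro h
  have hq : qq ≠ 0 := qq_ne_zero
  have h0 : qq = qq⁻¹ := sub_eq_zero.mp h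
  have h1 : qq ^ 2 - 1 = 0 := by
    have h1' : qq * qq = 1 := by nth_rewrite 2 [h0]; exact mul_inv_cancel₀ hq
    rw [pow_two, h1', sub_self]
  exact qq_sq_sub_one_ne_zero h1

set_option maxHeartbeats 4000000 in
set_option synthInstance.maxHeartbeats 1000000 in
/-- The adjacent-case ıSerre relation, proved over a generic scalar field. -/
theorem aux_adjacent (q : R) (hq : q ≠ 0) (hqs : q - q⁻¹ ≠ 0) (hq2 : q ^ 2 - 1 ≠ 0)
    (e f d g Kp k m : A)
    (hKk : Kp * k = 1) (hkK : k * Kp = 1)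
    (hKe : Kp * e = (q ^ 2) • (e * Kp))
    (hKd : Kp * d = q⁻¹ • (d * Kp))
    (hKf : Kp * f = (q ^ 2)⁻¹ • (f * Kp))
    (hKg : Kp * g = q • (g * Kp))
    (hKm : Kp * m = m * Kp)
    (hke : k * e = (q ^ 2)⁻¹ • (e * k))
    (hkd : k * d = q • (d * k))
    (hkf : k * f = (q ^ 2) • (f * k))
    (hkg : k * g = q⁻¹ • (g * k))
    (hme : m * e = q • (e * m))
    (hmf : m * f = q⁻¹ • (f * m))
    (hmk : m * k = k * m)
    (hef : e * f = f * e + (q - q⁻¹)⁻¹ • Kp - (q - q⁻¹)⁻¹ • k)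
    (heg : e * g = g * e)
    (hdf : d * f = f * d)
    (SE : e * e * d - (q + q⁻¹) • (e * d * e) + d * e * e = 0)
    (SF : f * f * g - (q + q⁻¹) • (f * g * f) + g * f * f = 0) :
    (f + q⁻¹ • (e * k)) * ((f + q⁻¹ • (e * k)) * (g + q⁻¹ • (d * m))
        - q • ((g + q⁻¹ • (d * m)) * (f + q⁻¹ • (e * k))))
      - q⁻¹ • (((f + q⁻¹ • (e * k)) * (g + q⁻¹ • (d * m))
        - q • ((g + q⁻¹ • (d * m)) * (f + q⁻¹ • (e * k)))) * (f + q⁻¹ • (e * k)))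
      = g + q⁻¹ • (d * m) := by
  have haug : (g + q⁻¹ • (d * m) : A)
      = (f * f * g - (q + q⁻¹) • (f * g * f) + g * f * f)
        + (q ^ 3)⁻¹ • ((e * e * d - (q + q⁻¹) • (e * d * e) + d * e * e) * (k * (k * m)))
        + (g + q⁻¹ • (d * m)) := by
    rw [SF, SE]; simp
  have h1 : -q + q ^ 3 ≠ 0 := by
    have h : -q + q ^ 3 = q * (q ^ 2 - 1) := by ring
    rw [h]; exact mul_ne_zero hq hq2
  have h2 : -q ^ 3 + q ^ 5 ≠ 0 := by
    have h : -q ^ 3 + q ^ 5 = q ^ 3 * (q ^ 2 - 1) := by ring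
    rw [h]; exact mul_ne_zero (pow_ne_zero 3 hq) hq2
  have h3 : -q ^ 2 + q ^ 4 ≠ 0 := by
    have h : -q ^ 2 + q ^ 4 = q ^ 2 * (q ^ 2 - 1) := by ring
    rw [h]; exact mul_ne_zero (pow_ne_zero 2 hq) hq2
  have hx4 : -q ^ 4 + q ^ 6 ≠ 0 := by
    have h : -q ^ 4 + q ^ 6 = q ^ 4 * (q ^ 2 - 1) := by ring
    rw [h]; exact mul_ne_zero (pow_ne_zero 4 hq) hq2
  have hx5 : -q ^ 5 + q ^ 7 ≠ 0 := by
    have h : -q ^ 5 + q ^ 7 = q ^ 5 * (q ^ 2 - 1) := by ring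
    rw [h]; exact mul_ne_zero (pow_ne_zero 5 hq) hq2
  have hx6 : -q ^ 6 + q ^ 8 ≠ 0 := by
    have h : -q ^ 6 + q ^ 8 = q ^ 6 * (q ^ 2 - 1) := by ring
    rw [h]; exact mul_ne_zero (pow_ne_zero 6 hq) hq2
  have hx7 : -q ^ 7 + q ^ 9 ≠ 0 := by
    have h : -q ^ 7 + q ^ 9 = q ^ 7 * (q ^ 2 - 1) := by ring
    rw [h]; exact mul_ne_zero (pow_ne_zero 7 hq) hq2
  have hx0 : -1 + q ^ 2 ≠ 0 := by
    have h : -1 + q ^ 2 = q ^ 2 - 1 := by ring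
    rw [h]; exact hq2
  refine Eq.trans ?_ haug.symm
  simp only [mul_add, add_mul, mul_sub, sub_mul, smul_add, smul_sub, smul_smul,
    smul_mul_assoc, mul_smul_comm, mul_assoc, mul_one, one_mul,
    hKk, mytrail0 hKk, hkK, mytrail0 hkK,
    hKe, mytrail hKe, hKd, mytrail hKd, hKf, mytrail hKf, hKg, mytrail hKg,
    hKm, mytrail1 hKm,
    hke, mytrail hke, hkd, mytrail hkd, hkf, mytrail hkf, hkg, mytrail hkg,
    hme, mytrail hme, hmf, mytrail hmf,
    hmk, mytrail1 hmk,
    hef, mytrail3 hef, heg, mytrail1 heg, hdf, mytrail1 hdf]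
  match_scalars <;> (field_simp; try ring; try field_simp; try ring)

end Helpers

set_option maxHeartbeats 1000000 in
set_option synthInstance.maxHeartbeats 1000000 in
/-- In the ıquantum group `U^ı ⊆ U_q(sl_n)` of type AI with parameters `ς_i = q⁻¹`,
`κ_i = 0`, i.e. the subalgebra generated by `B_i = F_i + q⁻¹E_iK_i⁻¹`, the generators
satisfy `[B_i, B_j] = 0` for `|i−j| > 1` and `[B_i, [B_i, B_j]_q]_{q⁻¹} = B_j` for
`|i−j| = 1`, where `[x,y]_{q^b} = xy − q^b yx`.  The ambient algebra `A` is any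
`ℂ(q)`-algebra with elements `E_i, F_i, K_i^{±1}` (indices `1 ≤ i ≤ n−1`) satisfying the
standard defining relations of `U_q(sl_n)`. -/
theorem statement7 (n : ℕ) (hn : 2 ≤ n)
    (A : Type) [Ring A] [Algebra Kq A]
    (E F K Kinv : ℕ → A)
    -- K_i invertible
    (hK : ∀ i, 1 ≤ i → i ≤ n - 1 → K i * Kinv i = 1 ∧ Kinv i * K i = 1)
    -- K_i K_j = K_j K_i
    (hKK : ∀ i j, 1 ≤ i → i ≤ n - 1 → 1 ≤ j → j ≤ n - 1 → K i * K j = K j * K i)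
    -- K_i E_j K_i⁻¹ = q^{a_{ij}} E_j
    (hKE : ∀ i j, 1 ≤ i → i ≤ n - 1 → 1 ≤ j → j ≤ n - 1 →
      K i * E j = (qq ^ cartanA i j) • (E j * K i))
    -- K_i F_j K_i⁻¹ = q^{−a_{ij}} F_j
    (hKF : ∀ i j, 1 ≤ i → i ≤ n - 1 → 1 ≤ j → j ≤ n - 1 →
      K i * F j = (qq ^ (-cartanA i j)) • (F j * K i))
    -- [E_i, F_j] = δ_{ij} (K_i − K_i⁻¹)/(q − q⁻¹)
    (hEF : ∀ i j, 1 ≤ i → i ≤ n - 1 → 1 ≤ j → j ≤ n - 1 →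
      E i * F j - F j * E i =
        if i = j then (qq - qq⁻¹)⁻¹ • (K i - Kinv i) else 0)
    -- distant generators commute
    (hEEfar : ∀ i j, 1 ≤ i → i ≤ n - 1 → 1 ≤ j → j ≤ n - 1 → 1 < |(i : ℤ) - j| →
      E i * E j = E j * E i)
    (hFFfar : ∀ i j, 1 ≤ i → i ≤ n - 1 → 1 ≤ j → j ≤ n - 1 → 1 < |(i : ℤ) - j| →
      F i * F j = F j * F i)
    -- quantum Serre relations for adjacent generators
    (hEE : ∀ i j, 1 ≤ i → i ≤ n - 1 → 1 ≤ j → j ≤ n - 1 → |(i : ℤ) - j| = 1 →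
      E i * E i * E j - (qq + qq⁻¹) • (E i * E j * E i) + E j * E i * E i = 0)
    (hFF : ∀ i j, 1 ≤ i → i ≤ n - 1 → 1 ≤ j → j ≤ n - 1 → |(i : ℤ) - j| = 1 →
      F i * F i * F j - (qq + qq⁻¹) • (F i * F j * F i) + F j * F i * F i = 0)
    -- the ı-generators B_i = F_i + q⁻¹ E_i K_i⁻¹
    (B : ℕ → A) (hB : ∀ i, 1 ≤ i → i ≤ n - 1 → B i = F i + qq⁻¹ • (E i * Kinv i))
    (i j : ℕ) (hi1 : 1 ≤ i) (hi2 : i ≤ n - 1) (hj1 : 1 ≤ j) (hj2 : j ≤ n - 1) :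
    (1 < |(i : ℤ) - j| → B i * B j - B j * B i = 0) ∧
    (|(i : ℤ) - j| = 1 →
      B i * (B i * B j - qq • (B j * B i)) -
        qq⁻¹ • ((B i * B j - qq • (B j * B i)) * B i) = B j) := by
  have hq : qq ≠ 0 := qq_ne_zero
  have hqs : qq - qq⁻¹ ≠ 0 := qq_sub_inv_ne_zero
  have hq2 : qq ^ 2 - 1 ≠ 0 := qq_sq_sub_one_ne_zero
  obtain ⟨hKk, hkK⟩ := hK i hi1 hi2
  obtain ⟨hKk', hkK'⟩ := hK j hj1 hj2
  constructor
  · -- distant case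
    intro hfar
    have hij : i ≠ j := by
      intro h; rw [h] at hfar; simp at hfar
    have hji : j ≠ i := hij.symm
    have hfar' : 1 < |(j : ℤ) - i| := by rwa [abs_sub_comm]
    have hcij0 : cartanA i j = 0 := by
      simp [cartanA, hij, hfar.ne']
    have hcji0 : cartanA j i = 0 := by
      simp [cartanA, hji, hfar'.ne']
    -- commutation rules
    have hKiEj : K i * E j = E j * K i := by
      have h := hKE i j hi1 hi2 hj1 hj2; rwa [hcij0, zpow_zero, one_smul] at h
    have hKiFj : K i * F j = F j * K i := by
      have h := hKF i j hi1 hi2 hj1 hj2; rwa [hcij0, neg_zero, zpow_zero, one_smul] at h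
    have hKjEi : K j * E i = E i * K j := by
      have h := hKE j i hj1 hj2 hi1 hi2; rwa [hcji0, zpow_zero, one_smul] at h
    have hKjFi : K j * F i = F i * K j := by
      have h := hKF j i hj1 hj2 hi1 hi2; rwa [hcji0, neg_zero, zpow_zero, one_smul] at h
    have hkd1 : Kinv i * E j = E j * Kinv i := swap_inv1 hKk hkK hKiEj
    have hkg1 : Kinv i * F j = F j * Kinv i := swap_inv1 hKk hkK hKiFj
    have hme1 : Kinv j * E i = E i * Kinv j := swap_inv1 hKk' hkK' hKjEi
    have hmf1 : Kinv j * F i = F i * Kinv j := swap_inv1 hKk' hkK' hKjFi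
    have hKm1 : Kinv j * K i = K i * Kinv j :=
      swap_inv1 hKk' hkK' (hKK j i hj1 hj2 hi1 hi2)
    have hmk1 : Kinv j * Kinv i = Kinv i * Kinv j :=
      (swap_inv1 hKk hkK hKm1.symm).symm
    have hgf1 : F j * F i = F i * F j := hFFfar j i hj1 hj2 hi1 hi2 hfar'
    have hde1 : E j * E i = E i * E j := hEEfar j i hj1 hj2 hi1 hi2 hfar'
    have heg1 : E i * F j = F j * E i := by
      have h := hEF i j hi1 hi2 hj1 hj2; rw [if_neg hij] at h; exact sub_eq_zero.mp h
    have hdf1 : E j * F i = F i * E j := by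
      have h := hEF j i hj1 hj2 hi1 hi2; rw [if_neg hji] at h; exact sub_eq_zero.mp h
    rw [hB i hi1 hi2, hB j hj1 hj2]
    simp only [mul_add, add_mul, mul_sub, sub_mul, smul_add, smul_sub, smul_smul,
      smul_mul_assoc, mul_smul_comm, mul_assoc, mul_one, one_mul,
      hgf1, mytrail1 hgf1, hde1, mytrail1 hde1, heg1, mytrail1 heg1, hdf1, mytrail1 hdf1,
      hkd1, mytrail1 hkd1, hkg1, mytrail1 hkg1, hme1, mytrail1 hme1, hmf1, mytrail1 hmf1,
      hmk1, mytrail1 hmk1]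
    abel
  · -- adjacent case
    intro hadj
    have hij : i ≠ j := by
      intro h; rw [h] at hadj; simp at hadj
    have hji : j ≠ i := hij.symm
    have hadj' : |(j : ℤ) - i| = 1 := by rwa [abs_sub_comm]
    have hcii : cartanA i i = 2 := by simp [cartanA]
    have hcjj : cartanA j j = 2 := by simp [cartanA]
    have hcij : cartanA i j = -1 := by simp [cartanA, hij, hadj]
    have hcji : cartanA j i = -1 := by simp [cartanA, hji, hadj']
    -- positive K-rules
    have hKe : K i * E i = (qq ^ 2) • (E i * K i) := by
      have h := hKE i i hi1 hi2 hi1 hi2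
      rwa [hcii, show ((2:ℤ)) = ((2:ℕ):ℤ) from rfl, zpow_natCast] at h
    have hKd : K i * E j = qq⁻¹ • (E j * K i) := by
      have h := hKE i j hi1 hi2 hj1 hj2
      rwa [hcij, zpow_neg_one] at h
    have hKf : K i * F i = (qq ^ 2)⁻¹ • (F i * K i) := by
      have h := hKF i i hi1 hi2 hi1 hi2
      rwa [hcii, show (-(2:ℤ)) = -((2:ℕ):ℤ) from rfl, zpow_neg, zpow_natCast] at h
    have hKg : K i * F j = qq • (F j * K i) := by
      have h := hKF i j hi1 hi2 hj1 hj2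
      rwa [hcij, neg_neg, zpow_one] at h
    have hKje : K j * E i = qq⁻¹ • (E i * K j) := by
      have h := hKE j i hj1 hj2 hi1 hi2
      rwa [hcji, zpow_neg_one] at h
    have hKjf : K j * F i = qq • (F i * K j) := by
      have h := hKF j i hj1 hj2 hi1 hi2
      rwa [hcji, neg_neg, zpow_one] at h
    -- inverse K-rules
    have hke : Kinv i * E i = (qq ^ 2)⁻¹ • (E i * Kinv i) :=
      swap_inv hKk hkK (pow_ne_zero 2 hq) hKe
    have hkd : Kinv i * E j = qq • (E j * Kinv i) := by
      have h := swap_inv hKk hkK (inv_ne_zero hq) hKd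
      rwa [inv_inv] at h
    have hkf : Kinv i * F i = (qq ^ 2) • (F i * Kinv i) := by
      have h := swap_inv hKk hkK (inv_ne_zero (pow_ne_zero 2 hq)) hKf
      rwa [inv_inv] at h
    have hkg : Kinv i * F j = qq⁻¹ • (F j * Kinv i) :=
      swap_inv hKk hkK hq hKg
    have hme : Kinv j * E i = qq • (E i * Kinv j) := by
      have h := swap_inv hKk' hkK' (inv_ne_zero hq) hKje
      rwa [inv_inv] at h
    have hmf : Kinv j * F i = qq⁻¹ • (F i * Kinv j) :=
      swap_inv hKk' hkK' hq hKjf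
    -- K_i vs K_j^{-1}
    have hKm : K i * Kinv j = Kinv j * K i :=
      (swap_inv1 hKk' hkK' (hKK j i hj1 hj2 hi1 hi2)).symm
    have hmk : Kinv j * Kinv i = Kinv i * Kinv j :=
      (swap_inv1 hKk hkK hKm).symm
    -- E-F rules
    have hef : E i * F i = F i * E i + (qq - qq⁻¹)⁻¹ • K i - (qq - qq⁻¹)⁻¹ • Kinv i := by
      have h := hEF i i hi1 hi2 hi1 hi2
      rw [if_pos rfl, smul_sub] at h
      have h2 := sub_eq_iff_eq_add.mp h
      rw [h2]; abel
    have heg : E i * F j = F j * E i := by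
      have h := hEF i j hi1 hi2 hj1 hj2; rw [if_neg hij] at h; exact sub_eq_zero.mp h
    have hdf : E j * F i = F i * E j := by
      have h := hEF j i hj1 hj2 hi1 hi2; rw [if_neg hji] at h; exact sub_eq_zero.mp h
    -- Serre relations
    have SE := hEE i j hi1 hi2 hj1 hj2 hadj
    have SF := hFF i j hi1 hi2 hj1 hj2 hadj
    rw [hB i hi1 hi2, hB j hj1 hj2]
    exact aux_adjacent qq hq hqs hq2 (E i) (F i) (E j) (F j) (K i) (Kinv i) (Kinv j)
      hKk hkK hKe hKd hKf hKg hKm hke hkd hkf hkg hme hmf hmk hef heg hdf SE SF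

end
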